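/- Every element of SO(n) is real in SO(n) (conjugate in SO(n) to its inverse) if and only if n ≢ 2 (mod 4). -/

import Mathlib

/-!
Let `T` be orthogonal and let `e` be a unit eigenvector of the symmetric matrix `T + Tᵀ`, say
`(T + Tᵀ) e = μ e`. The span of `e` and `T e` is invariant under `T` and `Tᵀ = T⁻¹`: either it is a
line on which `T` acts by a scalar, or it is a plane on which `T` acts as a rotation with cosine `μ / 2`.
Splitting it off orthogonally and inducting on `n`, `T` is reversed (`S T = Tᵀ S`) by an orthogonal
`S` made of a sign `±1` on each line and the reflection `diag(1, -1)` on each rotation plane. The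
signs on the lines make either determinant available, except when `T` consists of `n / 2` rotation
planes and no line, where `det S = (-1) ^ (n / 2)`. So `det S = 1` can be achieved when `n ≢ 2 (mod 4)`.

Conversely, for `n = 2m` with `m` odd, let `T` be block diagonal with `m` rotations by distinct angles
in `(0, π)`. A reverser `S` commutes with `T + Tᵀ`, which is diagonal with distinct values on distinct
blocks, so `S` is block diagonal. Each block `B` satisfies `B R = Rᵀ B` for a rotation `R` with nonzero
sine, which forces `B = [[p, q], [q, -p]]`, of determinant `-(p² + q²) ≤ 0`. A product of an odd number
of such determinants is `≤ 0`.
-/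

open Matrix

section GeneralMatrix

section

variable {ι κ R : Type*} [Fintype ι] [Fintype κ] [DecidableEq κ] [CommRing R]

theorem card_le_card_of_mul_eq_one {K : Type*} [Field K] {A : Matrix κ ι K} {B : Matrix ι κ K}
    (h : A * B = 1) : Fintype.card κ ≤ Fintype.card ι := by
  calc Fintype.card κ = (A * B).rank := by rw [h, rank_one]
    _ ≤ A.rank := rank_mul_le_left A B
    _ ≤ Fintype.card ι := rank_le_card_width A

theorem transpose_mul_mul_fromCols_eq_fromBlocks {α β : Type*} [Fintype α] [DecidableEq α]
    [Fintype β] [DecidableEq β] {T : Matrix ι ι R} {V : Matrix ι α R}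
    {W : Matrix ι β R} {A : Matrix α α R} (hU : (fromCols V W)ᵀ * fromCols V W = 1)
    (hTV : T * V = V * A) (hTtV : Tᵀ * V = V * Aᵀ) :
    (fromCols V W)ᵀ * T * fromCols V W = fromBlocks A 0 0 (Wᵀ * T * W) := by
  rw [transpose_fromCols, fromRows_mul_fromCols] at hU
  obtain ⟨hV, -, hWV, -⟩ := fromBlocks_inj.mp (hU.trans fromBlocks_one.symm)
  have hVW : Vᵀ * W = 0 := by
    rw [← transpose_transpose (Vᵀ * W), transpose_mul, transpose_transpose, hWV, transpose_zero]
  rw [transpose_fromCols, fromRows_mul, fromRows_mul_fromCols]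
  congr 1
  · rw [Matrix.mul_assoc, hTV, ← Matrix.mul_assoc, hV, Matrix.one_mul]
  · rw [← transpose_transpose T, ← transpose_mul, hTtV, transpose_mul, transpose_transpose,
      Matrix.mul_assoc, hVW, Matrix.mul_zero]
  · rw [Matrix.mul_assoc, hTV, ← Matrix.mul_assoc, hWV, Matrix.zero_mul]

theorem mul_transpose_of_eq_transpose_of_mul {M : Matrix ι ι R} {u v : ι → R}
    {B : Matrix (Fin 2) (Fin 2) R} (hu : M *ᵥ u = B 0 0 • u + B 1 0 • v)
    (hv : M *ᵥ v = B 0 1 • u + B 1 1 • v) :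
    M * (of ![u, v])ᵀ = (of ![u, v])ᵀ * B := by
  ext i j
  fin_cases j
  · simpa [mul_apply, Fin.sum_univ_two, mulVec, dotProduct, mul_comm] using congrFun hu i
  · simpa [mul_apply, Fin.sum_univ_two, mulVec, dotProduct, mul_comm] using congrFun hv i

end

variable {ι κ R : Type*} [Fintype ι] [DecidableEq ι] [Fintype κ] [DecidableEq κ] [CommRing R]

theorem det_mul_mul_transpose_of_transpose_mul_self {U : Matrix ι κ R} (hU : Uᵀ * U = 1)
    (hcard : Fintype.card ι = Fintype.card κ) (M : Matrix κ κ R) : (U * M * Uᵀ).det = M.det := by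
  let e : ι ≃ κ := Fintype.equivOfCardEq hcard
  set U' := U.submatrix id e
  have hU' : U'ᵀ * U' = 1 := by
    rw [transpose_submatrix, ← submatrix_mul _ _ _ _ _ Function.bijective_id, hU,
      submatrix_one_equiv]
  have hconj : U * M * Uᵀ = U' * M.submatrix e e * U'ᵀ := by
    simp [U', transpose_submatrix]
  rw [hconj, det_mul, det_mul, det_submatrix_equiv_self, mul_right_comm, ← det_mul,
    mul_eq_one_comm.mp hU', det_one, one_mul]

theorem mul_mul_inv_eq_inv_iff {S T : Matrix ι ι R} (hT : Tᵀ * T = 1) (hS : Sᵀ * S = 1) :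
    S * T * S⁻¹ = T⁻¹ ↔ S * T = Tᵀ * S := by
  rw [inv_eq_left_inv hT, inv_eq_left_inv hS]
  constructor
  · intro h
    rw [← h, Matrix.mul_assoc, hS, Matrix.mul_one]
  · intro h
    rw [h, Matrix.mul_assoc, mul_eq_one_comm.mp hS, Matrix.mul_one]

theorem commute_add_transpose {S T : Matrix ι ι R} (hT : Tᵀ * T = 1) (h : S * T = Tᵀ * S) :
    Commute S (T + Tᵀ) := by
  have hTS : S * Tᵀ = T * S := by
    calc S * Tᵀ = T * Tᵀ * (S * Tᵀ) := by rw [mul_eq_one_comm.mp hT, Matrix.one_mul]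
      _ = T * (S * T) * Tᵀ := by rw [h]; noncomm_ring
      _ = T * S := by
        rw [Matrix.mul_assoc, Matrix.mul_assoc, mul_eq_one_comm.mp hT, Matrix.mul_one]
  rw [Commute, SemiconjBy, mul_add, add_mul, h, hTS, add_comm]

theorem apply_eq_zero_of_commute_diagonal [NoZeroDivisors R] {S : Matrix ι ι R} {d : ι → R}
    (h : Commute S (diagonal d)) {i j : ι} (hd : d i ≠ d j) : S i j = 0 := by
  have := congrFun (congrFun h i) j
  rw [mul_diagonal, diagonal_mul] at this
  exact (mul_eq_zero.mp (show S i j * (d j - d i) = 0 by linear_combination this)).resolve_right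
    (sub_ne_zero.mpr hd.symm)

omit [Fintype ι] [DecidableEq ι] [Fintype κ] [CommRing R] in
theorem eq_blockDiagonal_of_apply_eq_zero [Zero R] {S : Matrix (ι × κ) (ι × κ) R}
    (h : ∀ i i' j k, j ≠ k → S (i, j) (i', k) = 0) :
    S = blockDiagonal fun k => of fun i i' => S (i, k) (i', k) := by
  ext ⟨i, j⟩ ⟨i', k⟩
  by_cases hjk : j = k
  · subst hjk; simp
  · rw [blockDiagonal_apply_ne _ _ _ hjk, h i i' j k hjk]

omit [DecidableEq ι] in
theorem prod_nonpos_of_odd_card [PartialOrder R] [IsOrderedRing R] {f : ι → R}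
    (hf : ∀ i, f i ≤ 0) (hι : Odd (Fintype.card ι)) : ∏ i, f i ≤ 0 := by
  have h := Finset.prod_neg (s := Finset.univ) (f := fun i => -f i)
  simp only [neg_neg, Finset.card_univ, hι.neg_one_pow, neg_one_mul] at h
  rw [h, neg_nonpos]
  exact Finset.prod_nonneg fun i _ => neg_nonneg.mpr (hf i)

omit [DecidableEq ι] in
theorem dotProduct_self_pos {v : ι → ℝ} (hv : v ≠ 0) : 0 < v ⬝ᵥ v :=
  lt_of_le_of_ne (Finset.sum_nonneg fun i _ => mul_self_nonneg (v i))
    (Ne.symm (dotProduct_self_eq_zero.not.mpr hv))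

theorem Matrix.IsHermitian.exists_dotProduct_self_eq_one_mulVec_eq_smul [Nonempty ι]
    {A : Matrix ι ι ℝ} (hA : A.IsHermitian) :
    ∃ (e : ι → ℝ) (μ : ℝ), e ⬝ᵥ e = 1 ∧ A *ᵥ e = μ • e := by
  let i₀ := Classical.arbitrary ι
  refine ⟨_, _, ?_, hA.mulVec_eigenvectorBasis i₀⟩
  have := hA.eigenvectorBasis.orthonormal.1 i₀
  rw [EuclideanSpace.norm_eq, Real.sqrt_eq_one] at this
  simpa [dotProduct, ← sq] using this

end GeneralMatrix

section Rotation

variable {R : Type*} [CommRing R]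

def rotationMatrix (c s : R) : Matrix (Fin 2) (Fin 2) R := !![c, -s; s, c]

theorem rotationMatrix_transpose_mul_self {c s : R} (h : c ^ 2 + s ^ 2 = 1) :
    (rotationMatrix c s)ᵀ * rotationMatrix c s = 1 := by
  ext i j
  fin_cases i <;> fin_cases j <;> simp [rotationMatrix, mul_apply, Fin.sum_univ_two] <;>
    first | linear_combination h | ring1

theorem det_rotationMatrix (c s : R) : (rotationMatrix c s).det = c ^ 2 + s ^ 2 := by
  rw [rotationMatrix, det_fin_two_of]; ring

theorem blockDiagonal_rotationMatrix_transpose_mul_self {o : Type*} [Fintype o] [DecidableEq o]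
    {c s : o → R} (hcs : ∀ k, c k ^ 2 + s k ^ 2 = 1) :
    (blockDiagonal fun k => rotationMatrix (c k) (s k))ᵀ *
      blockDiagonal (fun k => rotationMatrix (c k) (s k)) = 1 := by
  rw [blockDiagonal_transpose, ← blockDiagonal_mul]
  simp only [rotationMatrix_transpose_mul_self (hcs _)]
  exact blockDiagonal_one

theorem det_nonpos_of_mul_rotationMatrix_eq {B : Matrix (Fin 2) (Fin 2) ℝ} {c s : ℝ} (hs : s ≠ 0)
    (h : B * rotationMatrix c s = (rotationMatrix c s)ᵀ * B) : B.det ≤ 0 := by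
  have h00 := congrFun (congrFun h 0) 0
  have h01 := congrFun (congrFun h 0) 1
  simp [rotationMatrix, mul_apply, Fin.sum_univ_two] at h00 h01
  have hsym : B 1 0 = B 0 1 := mul_left_cancel₀ hs (by linarith)
  have hskew : B 1 1 = -B 0 0 := mul_left_cancel₀ hs (by linarith)
  rw [det_fin_two, hsym, hskew]
  nlinarith [sq_nonneg (B 0 0), sq_nonneg (B 0 1)]

end Rotation

section Reverser

variable {ι κ R : Type*} [Fintype ι] [DecidableEq ι] [Fintype κ] [DecidableEq κ] [CommRing R]

def IsOrthogonalReverser (S T : Matrix ι ι R) : Prop :=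
  Sᵀ * S = 1 ∧ S * T = Tᵀ * S

theorem IsOrthogonalReverser.fromBlocks {S₁ T₁ : Matrix ι ι R} {S₂ T₂ : Matrix κ κ R}
    (h₁ : IsOrthogonalReverser S₁ T₁) (h₂ : IsOrthogonalReverser S₂ T₂) :
    IsOrthogonalReverser (fromBlocks S₁ 0 0 S₂) (fromBlocks T₁ 0 0 T₂) := by
  constructor
  · rw [fromBlocks_transpose, fromBlocks_multiply, h₁.1, h₂.1]
    simp
  · simp [fromBlocks_transpose, fromBlocks_multiply, h₁.2, h₂.2]

theorem IsOrthogonalReverser.conj {U : Matrix ι κ R} (hU : Uᵀ * U = 1) (hU' : U * Uᵀ = 1)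
    {S : Matrix κ κ R} {T : Matrix ι ι R} (h : IsOrthogonalReverser S (Uᵀ * T * U)) :
    IsOrthogonalReverser (U * S * Uᵀ) T := by
  obtain ⟨hS, hST⟩ := h
  constructor
  · simp only [transpose_mul, transpose_transpose, Matrix.mul_assoc]
    rw [← Matrix.mul_assoc Uᵀ U, hU, Matrix.one_mul, ← Matrix.mul_assoc Sᵀ, hS, Matrix.one_mul, hU']
  · calc U * S * Uᵀ * T = U * (S * (Uᵀ * T * U)) * Uᵀ := by
          simp only [Matrix.mul_assoc, hU', Matrix.mul_one]
      _ = U * ((Uᵀ * T * U)ᵀ * S) * Uᵀ := by rw [hST]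
      _ = Tᵀ * (U * S * Uᵀ) := by
          simp only [transpose_mul, transpose_transpose, Matrix.mul_assoc]
          rw [← Matrix.mul_assoc U Uᵀ, hU', Matrix.one_mul]

theorem isOrthogonalReverser_smul_one {σ : R} (hσ : σ * σ = 1) (A : Matrix (Fin 1) (Fin 1) R) :
    IsOrthogonalReverser (σ • 1) A := by
  have hA : Aᵀ = A := by ext i j; rw [Subsingleton.elim i j, transpose_apply]
  refine ⟨?_, ?_⟩
  · rw [transpose_smul, transpose_one, smul_mul_smul_comm, Matrix.one_mul, hσ, one_smul]
  · rw [hA, Matrix.smul_mul, Matrix.mul_smul, Matrix.one_mul, Matrix.mul_one]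

theorem isOrthogonalReverser_rotationMatrix (c s : R) :
    IsOrthogonalReverser !![1, 0; 0, -1] (rotationMatrix c s) := by
  refine ⟨?_, ?_⟩ <;> ext i j <;> fin_cases i <;> fin_cases j <;>
    simp [rotationMatrix, mul_apply, Fin.sum_univ_two]

end Reverser

section InvariantSubspace

variable {ι : Type*} [Fintype ι] [DecidableEq ι] {T : Matrix ι ι ℝ}

theorem exists_fromCols_orthogonal {α β : Type*} [Fintype α] [DecidableEq α] [Fintype β]
    [DecidableEq β] {V : Matrix ι α ℝ} (hV : Vᵀ * V = 1)
    (hcard : Fintype.card α + Fintype.card β = Fintype.card ι) :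
    ∃ W : Matrix ι β ℝ, (fromCols V W)ᵀ * fromCols V W = 1 ∧ fromCols V W * (fromCols V W)ᵀ = 1 := by
  let v : α ⊕ β → EuclideanSpace ℝ ι := Sum.elim (fun a => WithLp.toLp 2 fun i => V i a) 0
  have hv : Orthonormal ℝ ((Set.range Sum.inl).domRestrict v) := by
    rw [orthonormal_iff_ite]
    simp only [Subtype.forall, Set.forall_mem_range, Subtype.mk.injEq, Sum.inl.injEq,
      Set.domRestrict_apply]
    intro a a'
    have := congrFun (congrFun hV a) a'
    simp only [mul_apply, transpose_apply, one_apply] at this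
    simpa [v, PiLp.inner_apply, mul_comm] using this
  obtain ⟨b, hb⟩ := hv.exists_orthonormalBasis_extension_of_card_eq (by simp [hcard])
  let U : Matrix ι (α ⊕ β) ℝ := of fun i j => b j i
  have hU : Uᵀ * U = 1 := by
    ext j k
    have := orthonormal_iff_ite.mp b.orthonormal j k
    simpa [U, mul_apply, one_apply, PiLp.inner_apply, mul_comm] using this
  have hUV : U = fromCols V U.toCols₂ := by
    conv_lhs => rw [← fromCols_toCols U]
    congr 1
    ext i a
    simp [U, toCols₁, hb (Sum.inl a) ⟨a, rfl⟩, v]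
  rw [hUV] at hU
  exact ⟨U.toCols₂, hU, (mul_eq_one_comm_of_card_eq _ ι ℝ (by simp [hcard])).mp hU⟩

theorem exists_orthogonal_transpose_mul_mul_eq_fromBlocks {α β : Type*} [Fintype α]
    [DecidableEq α] [Fintype β] [DecidableEq β] (hT : Tᵀ * T = 1) {V : Matrix ι α ℝ}
    {A : Matrix α α ℝ} (hV : Vᵀ * V = 1) (hTV : T * V = V * A) (hTtV : Tᵀ * V = V * Aᵀ)
    (hcard : Fintype.card α + Fintype.card β = Fintype.card ι) :
    ∃ (U : Matrix ι (α ⊕ β) ℝ) (T₂ : Matrix β β ℝ), Uᵀ * U = 1 ∧ U * Uᵀ = 1 ∧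
      Uᵀ * T * U = fromBlocks A 0 0 T₂ ∧ T₂ᵀ * T₂ = 1 := by
  obtain ⟨W, hU, hUU⟩ := exists_fromCols_orthogonal hV hcard
  set U := fromCols V W
  have hblocks := transpose_mul_mul_fromCols_eq_fromBlocks hU hTV hTtV
  refine ⟨U, Wᵀ * T * W, hU, hUU, hblocks, ?_⟩
  have horth : (Uᵀ * T * U)ᵀ * (Uᵀ * T * U) = 1 := by
    simp only [transpose_mul, transpose_transpose, Matrix.mul_assoc]
    rw [← Matrix.mul_assoc U Uᵀ, hUU, Matrix.one_mul, ← Matrix.mul_assoc Tᵀ, hT, Matrix.one_mul, hU]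
  rw [hblocks, fromBlocks_transpose, fromBlocks_multiply, ← fromBlocks_one] at horth
  simpa using (fromBlocks_inj.mp horth).2.2.2

variable {e w : ι → ℝ} {μ : ℝ}

theorem mulVec_eq_of_add_transpose_mulVec_eq (hT : Tᵀ * T = 1) (he : (T + Tᵀ) *ᵥ e = μ • e)
    (hw : w = T *ᵥ e - Tᵀ *ᵥ e) :
    T *ᵥ e = (μ / 2) • e + (1 / 2 : ℝ) • w ∧ Tᵀ *ᵥ e = (μ / 2) • e - (1 / 2 : ℝ) • w ∧
      T *ᵥ w = ((μ ^ 2 - 4) / 2) • e + (μ / 2) • w ∧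
      Tᵀ *ᵥ w = ((4 - μ ^ 2) / 2) • e + (μ / 2) • w := by
  have hTe : T *ᵥ e = μ • e - Tᵀ *ᵥ e := by rw [← he, add_mulVec]; abel
  have hTe' : T *ᵥ e = (μ / 2) • e + (1 / 2 : ℝ) • w := by rw [hw, hTe]; module
  have hTte' : Tᵀ *ᵥ e = (μ / 2) • e - (1 / 2 : ℝ) • w := by rw [hw, hTe]; module
  refine ⟨hTe', hTte', ?_, ?_⟩
  · have hw' : w = μ • e - (2 : ℝ) • Tᵀ *ᵥ e := by rw [hw, hTe]; module
    rw [hw', mulVec_sub, mulVec_smul, mulVec_smul, mulVec_mulVec, mul_eq_one_comm.mp hT,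
      one_mulVec, hTe', ← hw']
    module
  · have hw' : w = (2 : ℝ) • T *ᵥ e - μ • e := by rw [hw, hTe]; module
    rw [hw', mulVec_sub, mulVec_smul, mulVec_smul, mulVec_mulVec, hT, one_mulVec, hTte', ← hw']
    module

theorem dotProduct_eq_of_add_transpose_mulVec_eq (hT : Tᵀ * T = 1) (he : (T + Tᵀ) *ᵥ e = μ • e)
    (hee : e ⬝ᵥ e = 1) (hw : w = T *ᵥ e - Tᵀ *ᵥ e) : e ⬝ᵥ w = 0 ∧ w ⬝ᵥ w = 4 - μ ^ 2 := by
  obtain ⟨-, -, hTw, hTtw⟩ := mulVec_eq_of_add_transpose_mulVec_eq hT he hw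
  have hew : e ⬝ᵥ w = 0 := by
    rw [hw, dotProduct_sub, dotProduct_transpose_mulVec, sub_self]
  refine ⟨hew, ?_⟩
  have h₁ : (T *ᵥ e) ⬝ᵥ w = e ⬝ᵥ (Tᵀ *ᵥ w) := by rw [dotProduct_transpose_mulVec, dotProduct_comm]
  have h₂ : (Tᵀ *ᵥ e) ⬝ᵥ w = e ⬝ᵥ (T *ᵥ w) := by rw [dotProduct_comm, dotProduct_transpose_mulVec]
  calc w ⬝ᵥ w = (T *ᵥ e) ⬝ᵥ w - (Tᵀ *ᵥ e) ⬝ᵥ w := by nth_rewrite 1 [hw]; rw [sub_dotProduct]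
    _ = 4 - μ ^ 2 := by
      rw [h₁, h₂, hTw, hTtw]
      simp only [dotProduct_add, dotProduct_smul, hee, hew, smul_eq_mul]
      ring

omit [DecidableEq ι] in
theorem exists_invariant_line {a : ℝ} (hee : e ⬝ᵥ e = 1) (hTe : T *ᵥ e = a • e)
    (hTte : Tᵀ *ᵥ e = a • e) :
    ∃ (V : Matrix ι (Fin 1) ℝ) (A : Matrix (Fin 1) (Fin 1) ℝ), Vᵀ * V = 1 ∧ T * V = V * A ∧
      Tᵀ * V = V * Aᵀ := by
  refine ⟨replicateCol (Fin 1) e, a • 1, ?_, ?_, ?_⟩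
  · ext i j
    simpa [mul_apply, dotProduct, one_apply, Subsingleton.elim i j] using hee
  · rw [← replicateCol_mulVec, hTe, Matrix.mul_smul, Matrix.mul_one, replicateCol_smul]
  · rw [← replicateCol_mulVec, hTte, transpose_smul, transpose_one, Matrix.mul_smul,
      Matrix.mul_one, replicateCol_smul]

theorem exists_invariant_plane (hT : Tᵀ * T = 1) (he : (T + Tᵀ) *ᵥ e = μ • e)
    (hee : e ⬝ᵥ e = 1) (hw : w = T *ᵥ e - Tᵀ *ᵥ e) (hw0 : w ≠ 0) :
    ∃ (V : Matrix ι (Fin 2) ℝ) (c s : ℝ), Vᵀ * V = 1 ∧ T * V = V * rotationMatrix c s ∧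
      Tᵀ * V = V * (rotationMatrix c s)ᵀ := by
  obtain ⟨hTe, hTte, hTw, hTtw⟩ := mulVec_eq_of_add_transpose_mulVec_eq hT he hw
  obtain ⟨hew, hww⟩ := dotProduct_eq_of_add_transpose_mulVec_eq hT he hee hw
  have hpos := dotProduct_self_pos hw0
  set r := √(w ⬝ᵥ w)
  have hr : 0 < r := Real.sqrt_pos.mpr hpos
  have hwr : w ⬝ᵥ w = r ^ 2 := (Real.sq_sqrt hpos.le).symm
  set f := r⁻¹ • w with hf
  have hw' : w = r • f := by rw [hf, smul_smul, mul_inv_cancel₀ hr.ne', one_smul]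
  have hef : e ⬝ᵥ f = 0 := by rw [hf, dotProduct_smul, hew, smul_zero]
  have hff : f ⬝ᵥ f = 1 := by
    rw [hf, dotProduct_smul, smul_dotProduct, smul_eq_mul, smul_eq_mul, hwr]
    field_simp
  have hTe' : T *ᵥ e = (μ / 2) • e + (r / 2) • f := by rw [hTe, hw']; module
  have hTte' : Tᵀ *ᵥ e = (μ / 2) • e + (-(r / 2)) • f := by rw [hTte, hw']; module
  have hTf : T *ᵥ f = (-(r / 2)) • e + (μ / 2) • f := by
    rw [hf, mulVec_smul, hTw, show μ ^ 2 - 4 = -r ^ 2 by linarith]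
    match_scalars <;> field_simp
  have hTtf : Tᵀ *ᵥ f = (r / 2) • e + (μ / 2) • f := by
    rw [hf, mulVec_smul, hTtw, show 4 - μ ^ 2 = r ^ 2 by linarith]
    match_scalars <;> field_simp
  refine ⟨(of ![e, f])ᵀ, μ / 2, r / 2, ?_, ?_, ?_⟩
  · simp only [dotProduct] at hee hef hff
    ext i j
    fin_cases i <;> fin_cases j <;> simp [mul_apply, hee, hef, hff, mul_comm]
  · exact mul_transpose_of_eq_transpose_of_mul (by simpa [rotationMatrix] using hTe')
      (by simpa [rotationMatrix] using hTf)
  · exact mul_transpose_of_eq_transpose_of_mul (by simpa [rotationMatrix] using hTte')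
      (by simpa [rotationMatrix] using hTtf)

theorem exists_invariant_line_or_plane [Nonempty ι] (hT : Tᵀ * T = 1) :
    (∃ (V : Matrix ι (Fin 1) ℝ) (A : Matrix (Fin 1) (Fin 1) ℝ), Vᵀ * V = 1 ∧ T * V = V * A ∧
      Tᵀ * V = V * Aᵀ) ∨
    (∃ (V : Matrix ι (Fin 2) ℝ) (c s : ℝ), Vᵀ * V = 1 ∧ T * V = V * rotationMatrix c s ∧
      Tᵀ * V = V * (rotationMatrix c s)ᵀ) := by
  have hD : (T + Tᵀ).IsHermitian := by
    simp [IsHermitian, conjTranspose_eq_transpose_of_trivial, add_comm]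
  obtain ⟨e, μ, hee, he⟩ := hD.exists_dotProduct_self_eq_one_mulVec_eq_smul
  by_cases hw0 : T *ᵥ e - Tᵀ *ᵥ e = 0
  · obtain ⟨hTe, hTte, -, -⟩ := mulVec_eq_of_add_transpose_mulVec_eq hT he rfl
    rw [hw0, smul_zero, add_zero] at hTe
    rw [hw0, smul_zero, sub_zero] at hTte
    exact Or.inl (exists_invariant_line hee hTe hTte)
  · exact Or.inr (exists_invariant_plane hT he hee rfl hw0)

end InvariantSubspace

theorem exists_isOrthogonalReverser_det_eq {n : ℕ} {T : Matrix (Fin n) (Fin n) ℝ}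
    (hT : Tᵀ * T = 1) {ε : ℝ} (hε : ε = 1 ∨ ε = -1) (hεn : Even n → ε = (-1) ^ (n / 2)) :
    ∃ S, IsOrthogonalReverser S T ∧ S.det = ε := by
  induction n using Nat.strong_induction_on generalizing ε with
  | _ n ih =>
  rcases n.eq_zero_or_pos with rfl | hn
  · exact ⟨1, ⟨by simp, Subsingleton.elim _ _⟩, by simp [hεn ⟨0, rfl⟩]⟩
  have : Nonempty (Fin n) := ⟨⟨0, hn⟩⟩
  have hεε : ε * ε = 1 := by rcases hε with rfl | rfl <;> norm_num
  rcases exists_invariant_line_or_plane hT with ⟨V, A, hV, hTV, hTtV⟩ | ⟨V, c, s, hV, hTV, hTtV⟩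
  · obtain ⟨U, T₂, hU, hU', hUTU, hT₂⟩ := exists_orthogonal_transpose_mul_mul_eq_fromBlocks
      (β := Fin (n - 1)) hT hV hTV hTtV (by simp; omega)
    -- `ε₂` is admissible in dimension `n - 1`, and the sign `ε * ε₂` on the line restores `ε`.
    set ε₂ : ℝ := (-1) ^ ((n - 1) / 2)
    have hε₂ : ε₂ * ε₂ = 1 := by rw [← mul_pow]; norm_num
    obtain ⟨S₂, hS₂, hdet₂⟩ := ih (n - 1) (by omega) hT₂ (neg_one_pow_eq_or ℝ _) fun _ => rfl
    have hσ : (ε * ε₂) * (ε * ε₂) = 1 := by rw [mul_mul_mul_comm, hεε, hε₂, one_mul]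
    refine ⟨U * fromBlocks ((ε * ε₂) • 1) 0 0 S₂ * Uᵀ, IsOrthogonalReverser.conj hU hU'
      (hUTU ▸ (isOrthogonalReverser_smul_one hσ A).fromBlocks hS₂), ?_⟩
    rw [det_mul_mul_transpose_of_transpose_mul_self hU (by simp; omega), det_fromBlocks_zero₂₁,
      hdet₂, det_smul, det_one, Fintype.card_fin, pow_one, mul_one, mul_assoc, hε₂, mul_one]
  · have h2 : 2 ≤ n := by simpa using card_le_card_of_mul_eq_one hV
    obtain ⟨U, T₂, hU, hU', hUTU, hT₂⟩ := exists_orthogonal_transpose_mul_mul_eq_fromBlocks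
      (β := Fin (n - 2)) hT hV hTV hTtV (by simp; omega)
    have hεn₂ : Even (n - 2) → -ε = (-1) ^ ((n - 2) / 2) := by
      rintro ⟨k, hk⟩
      rw [hεn ⟨k + 1, by omega⟩, show n / 2 = (n - 2) / 2 + 1 by omega, pow_succ, mul_neg_one,
        neg_neg]
    obtain ⟨S₂, hS₂, hdet₂⟩ := ih (n - 2) (by omega) hT₂ (by rcases hε with rfl | rfl <;> simp) hεn₂
    refine ⟨U * fromBlocks !![1, 0; 0, -1] 0 0 S₂ * Uᵀ, IsOrthogonalReverser.conj hU hU'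
      (hUTU ▸ (isOrthogonalReverser_rotationMatrix c s).fromBlocks hS₂), ?_⟩
    rw [det_mul_mul_transpose_of_transpose_mul_self hU (by simp; omega), det_fromBlocks_zero₂₁,
      hdet₂, det_fin_two_of]
    ring

theorem det_nonpos_of_mul_blockDiagonal_rotationMatrix_eq {o : Type*} [Fintype o] [DecidableEq o]
    (ho : Odd (Fintype.card o)) {c s : o → ℝ} (hc : Function.Injective c) (hs : ∀ k, s k ≠ 0)
    (hcs : ∀ k, c k ^ 2 + s k ^ 2 = 1) {S : Matrix (Fin 2 × o) (Fin 2 × o) ℝ}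
    (hS : S * blockDiagonal (fun k => rotationMatrix (c k) (s k)) =
      (blockDiagonal fun k => rotationMatrix (c k) (s k))ᵀ * S) :
    S.det ≤ 0 := by
  set R := fun k => rotationMatrix (c k) (s k)
  have hdiag : blockDiagonal R + (blockDiagonal R)ᵀ = diagonal fun p => 2 * c p.2 := by
    ext ⟨i, j⟩ ⟨i', k⟩
    by_cases hjk : j = k
    · subst hjk
      fin_cases i <;> fin_cases i' <;> simp [R, rotationMatrix] <;> ring
    · rw [Matrix.add_apply, transpose_apply, blockDiagonal_apply_ne _ _ _ hjk,
        blockDiagonal_apply_ne _ _ _ (Ne.symm hjk), diagonal_apply_ne _ (by simp [hjk]), add_zero]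
  have hSD := commute_add_transpose (blockDiagonal_rotationMatrix_transpose_mul_self hcs) hS
  rw [hdiag] at hSD
  have hblock := eq_blockDiagonal_of_apply_eq_zero fun i i' j k hjk =>
    apply_eq_zero_of_commute_diagonal hSD (by simpa using hc.ne hjk)
  rw [hblock, blockDiagonal_transpose, ← blockDiagonal_mul, ← blockDiagonal_mul] at hS
  rw [hblock, det_blockDiagonal]
  exact prod_nonpos_of_odd_card (fun k => det_nonpos_of_mul_rotationMatrix_eq (hs k)
    (congrFun (blockDiagonal_injective hS) k)) ho

open Real in
theorem exists_orthogonal_det_one_forall_reverser_det_nonpos {m : ℕ} (hm : Odd m) :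
    ∃ T : Matrix (Fin (2 * m)) (Fin (2 * m)) ℝ, Tᵀ * T = 1 ∧ T.det = 1 ∧
      ∀ S, S * T = Tᵀ * S → S.det ≤ 0 := by
  set θ : Fin m → ℝ := fun k => π * (k + 1) / (m + 1)
  have hθ : ∀ k, θ k ∈ Set.Ioo 0 π := by
    intro k
    have hk : (k : ℝ) + 1 < m + 1 := by exact_mod_cast Nat.add_lt_add_right k.2 1
    constructor
    · positivity
    · rw [div_lt_iff₀ (by positivity)]; nlinarith [pi_pos]
  have hcos : Function.Injective (cos ∘ θ) := by
    intro k k' h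
    have := injOn_cos (Set.Ioo_subset_Icc_self (hθ k)) (Set.Ioo_subset_Icc_self (hθ k')) h
    simp only [θ] at this
    field_simp at this
    exact Fin.ext (by simpa using this)
  have hcs : ∀ k, cos (θ k) ^ 2 + sin (θ k) ^ 2 = 1 := fun k => cos_sq_add_sin_sq _
  set T₀ := blockDiagonal fun k => rotationMatrix (cos (θ k)) (sin (θ k))
  let e : Fin 2 × Fin m ≃ Fin (2 * m) := finProdFinEquiv
  refine ⟨reindex e e T₀, ?_, ?_, fun S hS => ?_⟩
  · rw [transpose_reindex, reindex_apply, reindex_apply, submatrix_mul_equiv,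
      blockDiagonal_rotationMatrix_transpose_mul_self hcs, submatrix_one_equiv]
  · rw [det_reindex_self, det_blockDiagonal]
    simp [det_rotationMatrix]
  · have h := congrArg (·.submatrix e e) hS
    simp only [reindex_apply] at h
    rw [submatrix_mul _ _ _ e _ e.bijective, submatrix_mul _ _ _ e _ e.bijective] at h
    simp only [submatrix_submatrix, transpose_submatrix, Equiv.symm_comp_self, submatrix_id_id] at h
    rw [← det_submatrix_equiv_self e]
    exact det_nonpos_of_mul_blockDiagonal_rotationMatrix_eq (by simpa using hm) hcos
      (fun k => (sin_pos_of_pos_of_lt_pi (hθ k).1 (hθ k).2).ne') hcs h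

/-- Every element of `SO(n)` is real in `SO(n)` (conjugate in `SO(n)` to its
inverse) if and only if `n ≢ 2 (mod 4)`. -/
theorem every_element_of_SOn_real_iff (n : ℕ) :
    (∀ T : Matrix (Fin n) (Fin n) ℝ, Tᵀ * T = 1 → T.det = 1 →
      ∃ S : Matrix (Fin n) (Fin n) ℝ,
        Sᵀ * S = 1 ∧ S.det = 1 ∧ S * T * S⁻¹ = T⁻¹) ↔ ¬ (n % 4 = 2) := by
  constructor
  · intro hall hn
    obtain ⟨m, rfl, hm⟩ : ∃ m, n = 2 * m ∧ Odd m := ⟨n / 2, by omega, Nat.odd_iff.mpr (by omega)⟩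
    obtain ⟨T, hT, hdet, hnonpos⟩ := exists_orthogonal_det_one_forall_reverser_det_nonpos hm
    obtain ⟨S, hS, hdetS, hST⟩ := hall T hT hdet
    have := hnonpos S ((mul_mul_inv_eq_inv_iff hT hS).mp hST)
    linarith
  · intro hn T hT _
    obtain ⟨S, ⟨hS, hST⟩, hdet⟩ := exists_isOrthogonalReverser_det_eq hT (Or.inl rfl)
      fun ⟨k, hk⟩ => (Even.neg_one_pow ⟨k / 2, by omega⟩).symm
    exact ⟨S, hS, hdet, (mul_mul_inv_eq_inv_iff hT hS).mpr hST⟩
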